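/- arXiv:2405.20250 — 3 statements merged into one kernel-verified Lean document; each statement's English description precedes it below -/
import Mathlib

section
/- Let A be a measurable space, μ a probability measure on A, and Z, Z' : A → ℝ bounded measurable functions. Then the total variation of the signed measure π(Z) - π(Z') satisfies |π(Z) - π(Z')|(A) ≤ 2·sup_{a∈A} |Z(a) - Z'(a)|. -/
/-!
The Gibbs measures have densities `f = e^Z / ∫ e^Z` and `f' = e^Z' / ∫ e^Z'` with respect
to `μ`, so the total variation of their difference is `∫ |f - f'| = 2 - 2 ∫ min f f'`.
If `|Z - Z'| ≤ s`, then `min (e^Z) (e^Z') ≥ e^(-s) max (e^Z) (e^Z')` pointwise; integrating and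
dividing by `max (∫ e^Z) (∫ e^Z')` gives `∫ min f f' ≥ e^(-s)`, and `2 - 2 e^(-s) ≤ 2 s`.
-/

open MeasureTheory

/-- The Gibbs measure associated with a measurable function `Z : A → ℝ` and reference
probability measure `μ`: the measure absolutely continuous with respect to `μ` with density
`a ↦ exp (Z a) / ∫ exp (Z a') μ(da')`. -/
noncomputable def gibbs {A : Type*} [MeasurableSpace A] (μ : Measure A) (Z : A → ℝ) :
    Measure A :=
  μ.withDensity fun a => ENNReal.ofReal (Real.exp (Z a) / ∫ a', Real.exp (Z a') ∂μ)

open Real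

section

variable {A : Type*} [MeasurableSpace A] {μ : Measure A}

lemma MeasureTheory.Measure.toSignedMeasure_withDensity_ofReal {f : A → ℝ}
    (hf : Integrable f μ) (hf0 : 0 ≤ᵐ[μ] f)
    [IsFiniteMeasure (μ.withDensity fun a => ENNReal.ofReal (f a))] :
    (μ.withDensity fun a => ENNReal.ofReal (f a)).toSignedMeasure = μ.withDensityᵥ f := by
  ext i hi
  rw [withDensityᵥ_apply hf hi, Measure.toSignedMeasure_apply_measurable hi, measureReal_def,
    withDensity_apply _ hi, ← ofReal_integral_eq_lintegral_ofReal hf.integrableOn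
      (ae_restrict_of_ae hf0), ENNReal.toReal_ofReal (setIntegral_nonneg_of_ae_restrict
      (ae_restrict_of_ae hf0))]

lemma MeasureTheory.Measure.totalVariation_withDensityᵥ_univ {g : A → ℝ}
    (hg : Integrable g μ) :
    SignedMeasure.totalVariation (μ.withDensityᵥ g) Set.univ
      = ENNReal.ofReal (∫ a, |g a| ∂μ) := by
  rw [SignedMeasure.totalVariation_eq_variation, Measure.variation_withDensityᵥ hg,
    withDensity_apply _ MeasurableSet.univ, setLIntegral_univ,
    ofReal_integral_eq_lintegral_ofReal hg.abs (ae_of_all _ fun a => abs_nonneg _)]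
  simp only [Real.enorm_eq_ofReal_abs]

lemma MeasureTheory.integral_abs_sub_eq_two_sub_two_mul_integral_min {f g : A → ℝ}
    (hf : Integrable f μ) (hg : Integrable g μ) (hf1 : ∫ a, f a ∂μ = 1)
    (hg1 : ∫ a, g a ∂μ = 1) :
    ∫ a, |f a - g a| ∂μ = 2 - 2 * ∫ a, min (f a) (g a) ∂μ := by
  have habs (a : A) : |f a - g a| = f a + g a - 2 * min (f a) (g a) := by
    linarith [max_sub_min_eq_abs' (f a) (g a), min_add_max (f a) (g a)]
  simp_rw [habs]
  have hfg : Integrable (fun a => f a + g a) μ := hf.add hg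
  have hmin : Integrable (fun a => 2 * min (f a) (g a)) μ := (hf.inf hg).const_mul 2
  rw [integral_sub hfg hmin, integral_add hf hg, integral_const_mul, hf1, hg1]
  ring

lemma exp_neg_mul_max_exp_le_min_exp {x y s : ℝ} (h : |x - y| ≤ s) :
    exp (-s) * max (exp x) (exp y) ≤ min (exp x) (exp y) := by
  rw [← exp_monotone.map_max, ← exp_monotone.map_min, ← exp_add, exp_le_exp]
  linarith [max_sub_min_eq_abs' x y]

noncomputable def gibbsDensity (μ : Measure A) (Z : A → ℝ) (a : A) : ℝ :=
  exp (Z a) / ∫ a', exp (Z a') ∂μ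

lemma integrable_gibbsDensity {Z : A → ℝ} (hZ : Integrable (fun a => exp (Z a)) μ) :
    Integrable (gibbsDensity μ Z) μ :=
  hZ.div_const _

lemma integral_gibbsDensity [NeZero μ] {Z : A → ℝ} (hZ : Integrable (fun a => exp (Z a)) μ) :
    ∫ a, gibbsDensity μ Z a ∂μ = 1 := by
  simp only [gibbsDensity]
  rw [integral_div, div_self (integral_exp_pos hZ).ne']

lemma toSignedMeasure_gibbs {Z : A → ℝ} (hZ : Integrable (fun a => exp (Z a)) μ)
    [IsFiniteMeasure (gibbs μ Z)] :
    (gibbs μ Z).toSignedMeasure = μ.withDensityᵥ (gibbsDensity μ Z) :=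
  have : IsFiniteMeasure (μ.withDensity fun a => ENNReal.ofReal (gibbsDensity μ Z a)) :=
    ‹IsFiniteMeasure (gibbs μ Z)›
  Measure.toSignedMeasure_withDensity_ofReal (integrable_gibbsDensity hZ)
    (ae_of_all _ fun a => by unfold gibbsDensity; positivity)

lemma exp_neg_le_integral_min_gibbsDensity [NeZero μ] {Z Z' : A → ℝ}
    (hZ : Integrable (fun a => exp (Z a)) μ) (hZ' : Integrable (fun a => exp (Z' a)) μ)
    {s : ℝ} (hs : ∀ a, |Z a - Z' a| ≤ s) :
    exp (-s) ≤ ∫ a, min (gibbsDensity μ Z a) (gibbsDensity μ Z' a) ∂μ := by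
  set N := ∫ a, exp (Z a) ∂μ
  set N' := ∫ a, exp (Z' a) ∂μ
  have hN : 0 < N := integral_exp_pos hZ
  have hN' : 0 < N' := integral_exp_pos hZ'
  have hM : 0 < max N N' := lt_max_of_lt_left hN
  have hmin : Integrable (fun a => min (exp (Z a)) (exp (Z' a))) μ := hZ.inf hZ'
  have hmax : Integrable (fun a => max (exp (Z a)) (exp (Z' a))) μ := hZ.sup hZ'
  have hmax_le : max N N' ≤ ∫ a, max (exp (Z a)) (exp (Z' a)) ∂μ :=
    max_le (integral_mono hZ hmax fun a => le_max_left _ _)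
      (integral_mono hZ' hmax fun a => le_max_right _ _)
  have hmin_le (a : A) : min (exp (Z a)) (exp (Z' a)) / max N N'
      ≤ min (gibbsDensity μ Z a) (gibbsDensity μ Z' a) :=
    le_min (div_le_div₀ (exp_pos _).le (min_le_left _ _) hN (le_max_left _ _))
      (div_le_div₀ (exp_pos _).le (min_le_right _ _) hN' (le_max_right _ _))
  calc exp (-s) = exp (-s) * max N N' / max N N' := by field_simp
    _ ≤ (∫ a, exp (-s) * max (exp (Z a)) (exp (Z' a)) ∂μ) / max N N' := by
        rw [integral_const_mul]; gcongr
    _ ≤ (∫ a, min (exp (Z a)) (exp (Z' a)) ∂μ) / max N N' := by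
        gcongr ?_ / _
        exact integral_mono (hmax.const_mul _) hmin fun a => exp_neg_mul_max_exp_le_min_exp (hs a)
    _ = ∫ a, min (exp (Z a)) (exp (Z' a)) / max N N' ∂μ := (integral_div _ _).symm
    _ ≤ ∫ a, min (gibbsDensity μ Z a) (gibbsDensity μ Z' a) ∂μ :=
        integral_mono (hmin.div_const _)
          ((integrable_gibbsDensity hZ).inf (integrable_gibbsDensity hZ')) hmin_le

lemma integrable_exp_of_abs_le [IsFiniteMeasure μ] {Z : A → ℝ} (hZ : Measurable Z) {C : ℝ}
    (hC : ∀ a, |Z a| ≤ C) : Integrable (fun a => exp (Z a)) μ :=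
  Integrable.of_bound hZ.exp.aestronglyMeasurable (exp C) (ae_of_all _ fun a => by
    rw [norm_of_nonneg (exp_pos _).le, exp_le_exp]; exact le_of_abs_le (hC a))

end

/-- For a probability measure `μ` and bounded measurable `Z, Z' : A → ℝ`,
the total variation of the signed measure `π(Z) - π(Z')` satisfies
`|π(Z) - π(Z')|(A) ≤ 2·sup_a |Z a - Z' a|`.
(The finiteness of the Gibbs measures, recorded here as instance hypotheses, is automatic
from the stated boundedness assumptions.) -/
theorem totalVariation_gibbs_sub_gibbs_le
    {A : Type*} [MeasurableSpace A] (μ : Measure A) [IsProbabilityMeasure μ]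
    (Z Z' : A → ℝ) (hZmeas : Measurable Z) (hZ'meas : Measurable Z')
    (hZb : ∃ C, ∀ a, |Z a| ≤ C) (hZ'b : ∃ C, ∀ a, |Z' a| ≤ C)
    [IsFiniteMeasure (gibbs μ Z)] [IsFiniteMeasure (gibbs μ Z')] :
    ((gibbs μ Z).toSignedMeasure - (gibbs μ Z').toSignedMeasure).totalVariation Set.univ
      ≤ ENNReal.ofReal (2 * ⨆ a, |Z a - Z' a|) := by
  obtain ⟨C, hC⟩ := hZb
  obtain ⟨C', hC'⟩ := hZ'b
  have hexpZ := integrable_exp_of_abs_le (μ := μ) hZmeas hC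
  have hexpZ' := integrable_exp_of_abs_le (μ := μ) hZ'meas hC'
  have hbdd : BddAbove (Set.range fun a => |Z a - Z' a|) :=
    ⟨C + C', Set.forall_mem_range.2 fun a => (abs_sub _ _).trans (add_le_add (hC a) (hC' a))⟩
  set s := ⨆ a, |Z a - Z' a|
  have hf := integrable_gibbsDensity hexpZ
  have hf' := integrable_gibbsDensity hexpZ'
  rw [toSignedMeasure_gibbs hexpZ, toSignedMeasure_gibbs hexpZ', ← withDensityᵥ_sub hf hf',
    Measure.totalVariation_withDensityᵥ_univ (hf.sub hf')]
  gcongr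
  calc ∫ a, |(gibbsDensity μ Z - gibbsDensity μ Z') a| ∂μ
      = 2 - 2 * ∫ a, min (gibbsDensity μ Z a) (gibbsDensity μ Z' a) ∂μ :=
        integral_abs_sub_eq_two_sub_two_mul_integral_min hf hf' (integral_gibbsDensity hexpZ)
          (integral_gibbsDensity hexpZ')
    _ ≤ 2 - 2 * exp (-s) := by
        gcongr
        exact exp_neg_le_integral_min_gibbsDensity hexpZ hexpZ' fun a => le_ciSup hbdd a
    _ ≤ 2 * s := by linarith [add_one_le_exp (-s)]
end

section
/- Let O ⊂ ℝ^d be a nonempty bounded domain (open, connected and bounded) with closure Ō, let A ⊂ ℝ^k be a nonempty convex compact set with nonempty interior, and let μ be the uniform probability measure on A (normalized Lebesgue measure restricted to A). Let h : Ō × A → ℝ be continuous and suppose that for every x ∈ Ō: (i) the function a ↦ h(x,a) attains its minimum over A at a unique point, and this point lies in the interior of A; (ii) a ↦ h(x,a) is twice differentiable on A, and the second derivative map (x,a) ↦ D²_{aa}h(x,a) is continuous on Ō × A. Then there exist C ≥ 0 and τ₀ > 0 such that for all x ∈ Ō and all τ ∈ (0, τ₀], 0 ≤ -τ·ln( ∫_A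 exp( -h(x,a)/τ ) μ(da) ) - min_{a∈A} h(x,a) ≤ C·τ·ln(1/τ). -/
/-! The lower bound holds because `h x ≥ min` and `μ` is a probability measure. For the upper
bound, the gradient of `h x` vanishes at its interior minimizer `a₁`, so a bound `M` on the Hessian
over the compact set `Ō × A` gives `h x a ≤ h x a₁ + M ‖a - a₁‖²` on `A`. Shrinking a fixed ball
`B(z, r) ⊆ A` towards `a₁` by a factor `t` proportional to `τ` (convexity keeps it inside `A`)
yields a ball on which `h x ≤ h x a₁ + τ` and whose `μ`-measure is `t ^ k μ(B(z, r))`. Hence the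
integral is at least `exp (-h x a₁ / τ - 1)` times a constant multiple of `τ ^ k`, and taking
`-τ log` costs `O(τ log (1 / τ))`, with constants depending only on `A`, `z`, `r` and `M`. -/

open MeasureTheory Metric Module Real ProbabilityTheory Set Topology

lemma one_le_log_one_div {τ : ℝ} (hτ : 0 < τ) (hτ₀ : τ ≤ exp (-1)) : 1 ≤ log (1 / τ) := by
  rw [one_div, log_inv, le_neg, ← log_exp (-1)]
  exact log_le_log hτ hτ₀

section Softmin

noncomputable def softmin {Ω : Type*} [MeasurableSpace Ω] (μ : Measure Ω) (τ : ℝ) (f : Ω → ℝ) :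
    ℝ :=
  -τ * log (∫ a, exp (-f a / τ) ∂μ)

variable {Ω : Type*} [MeasurableSpace Ω] {μ : Measure Ω} {f : Ω → ℝ} {τ m : ℝ}

lemma le_softmin_of_integral_le (hτ : 0 < τ) (hI : 0 < ∫ a, exp (-f a / τ) ∂μ)
    (h : ∫ a, exp (-f a / τ) ∂μ ≤ exp (-m / τ)) : m ≤ softmin μ τ f := by
  have : log (∫ a, exp (-f a / τ) ∂μ) * τ ≤ -m :=
    (le_div_iff₀ hτ).1 ((log_le_iff_le_exp hI).2 h)
  rw [softmin]
  linarith

lemma softmin_le_of_exp_mul_le_integral {p : ℝ} (hτ : 0 < τ) (hp : 0 < p)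
    (h : exp (-m / τ) * p ≤ ∫ a, exp (-f a / τ) ∂μ) : softmin μ τ f ≤ m - τ * log p := by
  have hlog : -m / τ + log p ≤ log (∫ a, exp (-f a / τ) ∂μ) := by
    rw [← log_exp (-m / τ), ← log_mul (exp_pos _).ne' hp.ne']
    exact log_le_log (by positivity) h
  have := mul_le_mul_of_nonneg_left hlog hτ.le
  rw [mul_add, mul_div_cancel₀ _ hτ.ne'] at this
  rw [softmin]
  linarith

lemma integral_exp_neg_div_le_exp [IsProbabilityMeasure μ] (hτ : 0 ≤ τ)
    (hf : ∀ᵐ a ∂μ, m ≤ f a) : ∫ a, exp (-f a / τ) ∂μ ≤ exp (-m / τ) := calc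
  ∫ a, exp (-f a / τ) ∂μ ≤ ∫ _, exp (-m / τ) ∂μ :=
    integral_mono_of_nonneg (ae_of_all _ fun _ => (exp_pos _).le) (integrable_const _)
      (hf.mono fun _ ha => exp_le_exp.2 (div_le_div_of_nonneg_right (neg_le_neg ha) hτ))
  _ = exp (-m / τ) := by simp

end Softmin

section NormedSpace

variable {E F : Type*} [NormedAddCommGroup E] [NormedSpace ℝ E] [NormedAddCommGroup F]
  [NormedSpace ℝ F]

theorem Convex.norm_image_sub_le_of_norm_hessian_le {A : Set E} {g : E → F}
    {g' : E → E →L[ℝ] F} {g'' : E → E →L[ℝ] E →L[ℝ] F} {M : ℝ} {a₁ a : E} (hA : Convex ℝ A)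
    (hg : ∀ b ∈ A, HasFDerivWithinAt g (g' b) A b)
    (hg' : ∀ b ∈ A, HasFDerivWithinAt g' (g'' b) A b) (hM : ∀ b ∈ A, ‖g'' b‖ ≤ M)
    (ha₁ : a₁ ∈ A) (hcrit : g' a₁ = 0) (ha : a ∈ A) : ‖g a - g a₁‖ ≤ M * ‖a - a₁‖ ^ 2 := by
  have hseg : segment ℝ a₁ a ⊆ A := hA.segment_subset ha₁ ha
  have hM0 : 0 ≤ M := (norm_nonneg (g'' a₁)).trans (hM a₁ ha₁)
  have hgrad : ∀ b ∈ segment ℝ a₁ a, ‖g' b‖ ≤ M * ‖a - a₁‖ := fun b hb => calc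
    ‖g' b‖ = ‖g' b - g' a₁‖ := by rw [hcrit, sub_zero]
    _ ≤ M * ‖b - a₁‖ := hA.norm_image_sub_le_of_norm_hasFDerivWithin_le hg' hM ha₁ (hseg hb)
    _ ≤ M * ‖a - a₁‖ := by
      gcongr
      simpa [dist_eq_norm, norm_sub_rev] using segment_subset_closedBall_left a₁ a hb
  calc ‖g a - g a₁‖ ≤ M * ‖a - a₁‖ * ‖a - a₁‖ :=
        (convex_segment a₁ a).norm_image_sub_le_of_norm_hasFDerivWithin_le
          (fun b hb => (hg b (hseg hb)).mono hseg) hgrad (left_mem_segment ℝ a₁ a)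
          (right_mem_segment ℝ a₁ a)
    _ = M * ‖a - a₁‖ ^ 2 := by ring

theorem IsMinOn.le_add_mul_norm_sub_sq_of_norm_hessian_le {A : Set E} {g : E → ℝ}
    {g' : E → E →L[ℝ] ℝ} {g'' : E → E →L[ℝ] E →L[ℝ] ℝ} {M : ℝ} {a₁ a : E} (hA : Convex ℝ A)
    (hg : ∀ b ∈ A, HasFDerivWithinAt g (g' b) A b)
    (hg' : ∀ b ∈ A, HasFDerivWithinAt g' (g'' b) A b) (hM : ∀ b ∈ A, ‖g'' b‖ ≤ M)
    (hmin : IsMinOn g A a₁) (ha₁ : a₁ ∈ interior A) (ha : a ∈ A) :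
    g a ≤ g a₁ + M * ‖a - a₁‖ ^ 2 := by
  have hA₁ : A ∈ 𝓝 a₁ := mem_interior_iff_mem_nhds.1 ha₁
  have hcrit : g' a₁ = 0 :=
    (hmin.isLocalMin hA₁).hasFDerivAt_eq_zero ((hg a₁ (interior_subset ha₁)).hasFDerivAt hA₁)
  have := hA.norm_image_sub_le_of_norm_hessian_le hg hg' hM (interior_subset ha₁) hcrit ha
  rw [Real.norm_eq_abs] at this
  linarith [le_abs_self (g a - g a₁)]

theorem Convex.ball_add_smul_sub_subset {A : Set E} {z a : E} {r t : ℝ} (hA : Convex ℝ A)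
    (hball : ball z r ⊆ A) (ha : a ∈ A) (ht0 : 0 < t) (ht1 : t ≤ 1) :
    ball (a + t • (z - a)) (t * r) ⊆ A := by
  intro p hp
  set y := a + t⁻¹ • (p - a)
  have hpy : p = a + t • (y - a) := by
    simp only [y, add_sub_cancel_left, smul_smul, mul_inv_cancel₀ ht0.ne', one_smul]
    abel
  have hy : y ∈ ball z r := by
    rw [mem_ball_iff_norm] at hp ⊢
    rw [hpy, add_sub_add_left_eq_sub, ← smul_sub, sub_sub_sub_cancel_right, norm_smul,
      Real.norm_of_nonneg ht0.le] at hp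
    exact lt_of_mul_lt_mul_left hp ht0.le
  rw [hpy]
  exact hA.add_smul_sub_mem ha (hball hy) ⟨ht0.le, ht1⟩

end NormedSpace

lemma cond_real_eq_div_of_subset {Ω : Type*} [MeasurableSpace Ω] (μ : Measure Ω) {A B : Set Ω}
    (hB : MeasurableSet B) (hBA : B ⊆ A) : (μ[|A]).real B = μ.real B / μ.real A := by
  rw [measureReal_def, cond_apply' hB, inter_eq_right.2 hBA, ENNReal.toReal_mul,
    ENNReal.toReal_inv, div_eq_inv_mul]
  rfl

lemma isProbabilityMeasure_cond_of_ball_subset {X : Type*} [PseudoMetricSpace X]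
    [MeasurableSpace X] {μ : Measure X} [μ.IsOpenPosMeasure] [IsFiniteMeasureOnCompacts μ]
    {A : Set X} {z : X} {r : ℝ} (hAc : IsCompact A) (hr : 0 < r) (hball : ball z r ⊆ A) :
    IsProbabilityMeasure (μ[|A]) :=
  cond_isProbabilityMeasure_of_finite
    ((measure_ball_pos μ z hr).trans_le (measure_mono hball)).ne' hAc.measure_lt_top.ne

section Haar

variable {E : Type*} [NormedAddCommGroup E] [NormedSpace ℝ E] [FiniteDimensional ℝ E]
  [MeasurableSpace E] [BorelSpace E] (μ : Measure E) [μ.IsAddHaarMeasure]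

lemma addHaar_real_ball_mul_of_pos (w z : E) {t : ℝ} (ht : 0 < t) (r : ℝ) :
    μ.real (ball w (t * r)) = t ^ finrank ℝ E * μ.real (ball z r) := by
  rw [measureReal_def, Measure.addHaar_ball_mul_of_pos μ w ht, ← Measure.addHaar_ball_center μ z,
    ENNReal.toReal_mul, ENNReal.toReal_ofReal (by positivity), measureReal_def]

variable {A : Set E} {z a₁ : E} {r : ℝ}

theorem exp_neg_div_mul_le_integral_cond {f : E → ℝ} {K τ t : ℝ} (hA : Convex ℝ A)
    (hAc : IsCompact A) (hr : 0 < r) (hball : ball z r ⊆ A) (hf : ContinuousOn f A)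
    (ha₁ : a₁ ∈ A) (hK : 0 ≤ K) (hquad : ∀ a ∈ A, f a ≤ f a₁ + K * ‖a - a₁‖ ^ 2) (hτ : 0 < τ)
    (ht0 : 0 < t) (ht1 : t ≤ 1) (hKt : K * t * (r + diam A) ^ 2 ≤ τ) :
    exp (-(f a₁ + τ) / τ) * (t ^ finrank ℝ E * (μ[|A]).real (ball z r)) ≤
      ∫ a, exp (-f a / τ) ∂μ[|A] := by
  have := isProbabilityMeasure_cond_of_ball_subset (μ := μ) hAc hr hball
  set w := a₁ + t • (z - a₁)
  have hwA : ball w (t * r) ⊆ A := hA.ball_add_smul_sub_subset hball ha₁ ht0 ht1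
  have hfw : ∀ p ∈ ball w (t * r), f p ≤ f a₁ + τ := by
    intro p hp
    have hza₁ : ‖z - a₁‖ ≤ diam A := by
      rw [← dist_eq_norm]; exact dist_le_diam_of_mem hAc.isBounded (hball (mem_ball_self hr)) ha₁
    have hpa₁ : ‖p - a₁‖ ≤ t * (r + diam A) := calc
      ‖p - a₁‖ ≤ ‖p - w‖ + ‖w - a₁‖ := norm_sub_le_norm_sub_add_norm_sub p w a₁
      _ ≤ t * r + t * diam A := by
        rw [add_sub_cancel_left, norm_smul, Real.norm_of_nonneg ht0.le]
        gcongr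
        exact (mem_ball_iff_norm.1 hp).le
      _ = t * (r + diam A) := by ring
    have : K * ‖p - a₁‖ ^ 2 ≤ K * t * (r + diam A) ^ 2 := calc
      K * ‖p - a₁‖ ^ 2 ≤ K * (t * (r + diam A)) ^ 2 := by gcongr
      _ = K * t * (r + diam A) ^ 2 * t := by ring
      _ ≤ K * t * (r + diam A) ^ 2 := mul_le_of_le_one_right (by positivity) ht1
    linarith [hquad p (hwA hp)]
  have hint : Integrable (fun a => exp (-f a / τ)) (μ[|A]) :=
    ((continuous_exp.comp_continuousOn (hf.neg.div_const τ)).integrableOn_compact hAc).smul_measure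
      (ENNReal.inv_ne_top.2 ((measure_ball_pos μ z hr).trans_le (measure_mono hball)).ne')
  have hscale : (μ[|A]).real (ball w (t * r)) = t ^ finrank ℝ E * (μ[|A]).real (ball z r) := by
    rw [cond_real_eq_div_of_subset μ measurableSet_ball hwA,
      cond_real_eq_div_of_subset μ measurableSet_ball hball, addHaar_real_ball_mul_of_pos μ w z ht0,
      mul_div_assoc]
  rw [← hscale]
  calc exp (-(f a₁ + τ) / τ) * (μ[|A]).real (ball w (t * r))
      ≤ ∫ a in ball w (t * r), exp (-f a / τ) ∂μ[|A] :=
        setIntegral_ge_of_const_le_real measurableSet_ball (measure_ne_top _ _)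
          (fun p hp => exp_le_exp.2 (div_le_div_of_nonneg_right (neg_le_neg (hfw p hp)) hτ.le))
          hint.integrableOn
    _ ≤ ∫ a, exp (-f a / τ) ∂μ[|A] :=
        setIntegral_le_integral hint (ae_of_all _ fun _ => (exp_pos _).le)

theorem exists_softmin_sub_min_le {K : ℝ} (hA : Convex ℝ A) (hAc : IsCompact A) (hr : 0 < r)
    (hball : ball z r ⊆ A) (hK : 0 ≤ K) :
    ∃ C ≥ (0 : ℝ), ∀ f : E → ℝ, ∀ a₁ ∈ A, ContinuousOn f A → IsMinOn f A a₁ →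
      (∀ a ∈ A, f a ≤ f a₁ + K * ‖a - a₁‖ ^ 2) → ∀ τ : ℝ, 0 < τ → τ ≤ exp (-1) →
      0 ≤ softmin (μ[|A]) τ f - f a₁ ∧ softmin (μ[|A]) τ f - f a₁ ≤ C * τ * log (1 / τ) := by
  have := isProbabilityMeasure_cond_of_ball_subset (μ := μ) hAc hr hball
  have hP0 : 0 < (μ[|A]).real (ball z r) := by
    rw [cond_real_eq_div_of_subset μ measurableSet_ball hball]
    exact div_pos (ENNReal.toReal_pos (measure_ball_pos μ z hr).ne' measure_ball_lt_top.ne)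
      (ENNReal.toReal_pos ((measure_ball_pos μ z hr).trans_le (measure_mono hball)).ne'
        hAc.measure_lt_top.ne)
  set n := finrank ℝ E
  set P := (μ[|A]).real (ball z r)
  set c := max (K * (r + diam A) ^ 2) 1
  have hc1 : 1 ≤ c := le_max_right _ _
  have hC0 : 0 ≤ 1 - log P + n * log c := by
    have := log_nonpos hP0.le measureReal_le_one
    have := mul_nonneg (Nat.cast_nonneg (α := ℝ) n) (log_nonneg hc1)
    linarith
  refine ⟨n + (1 - log P + n * log c), by positivity,
    fun f a₁ ha₁ hf hmin hquad τ hτ hτ₀ => ?_⟩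
  have hτ1 : τ ≤ 1 := hτ₀.trans (exp_le_one_iff.2 (by norm_num))
  have hc0 : 0 < c := one_pos.trans_le hc1
  have hKt : K * (τ / c) * (r + diam A) ^ 2 ≤ τ := calc
    K * (τ / c) * (r + diam A) ^ 2 = K * (r + diam A) ^ 2 * τ / c := by ring
    _ ≤ c * τ / c := by gcongr; exact le_max_left _ _
    _ = τ := by field_simp
  have hp : 0 < (τ / c) ^ n * P := by positivity
  have hlower : exp (-(f a₁ + τ) / τ) * ((τ / c) ^ n * P) ≤ ∫ a, exp (-f a / τ) ∂μ[|A] :=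
    exp_neg_div_mul_le_integral_cond μ hA hAc hr hball hf ha₁ hK hquad hτ (by positivity)
      (div_le_one_of_le₀ (hτ1.trans hc1) hc0.le) hKt
  have hupper : ∫ a, exp (-f a / τ) ∂μ[|A] ≤ exp (-f a₁ / τ) :=
    integral_exp_neg_div_le_exp hτ.le
      (ae_cond_of_forall_mem hAc.isClosed.measurableSet (isMinOn_iff.1 hmin))
  have hI0 : 0 < ∫ a, exp (-f a / τ) ∂μ[|A] := (mul_pos (exp_pos _) hp).trans_le hlower
  refine ⟨sub_nonneg.2 (le_softmin_of_integral_le hτ hI0 hupper), ?_⟩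
  have hlogp : log ((τ / c) ^ n * P) = log P - n * log c - n * log (1 / τ) := by
    rw [log_mul (by positivity) hP0.ne', log_pow, log_div hτ.ne' hc0.ne', one_div, log_inv]
    ring
  have key := softmin_le_of_exp_mul_le_integral hτ hp hlower
  rw [hlogp] at key
  calc softmin (μ[|A]) τ f - f a₁
      ≤ (1 - log P + n * log c) * τ + n * τ * log (1 / τ) := by linear_combination key
    _ ≤ (1 - log P + n * log c) * (τ * log (1 / τ)) + n * τ * log (1 / τ) := by
      gcongr
      exact le_mul_of_one_le_right hτ.le (one_le_log_one_div hτ hτ₀)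
    _ = (n + (1 - log P + n * log c)) * τ * log (1 / τ) := by ring

end Haar

theorem laplace_asymptotics_unique_interior_minimizer_general
    {d k : ℕ}
    (O : Set (EuclideanSpace ℝ (Fin d)))
    (hObdd : Bornology.IsBounded O)
    (A : Set (EuclideanSpace ℝ (Fin k))) (hAconv : Convex ℝ A)
    (hAcomp : IsCompact A)
    (μ : Measure (EuclideanSpace ℝ (Fin k)))
    (hμ : μ = (volume A)⁻¹ • volume.restrict A)
    (h : EuclideanSpace ℝ (Fin d) → EuclideanSpace ℝ (Fin k) → ℝ)
    (hmin : ∀ x ∈ closure O, ∃ a ∈ interior A, IsMinOn (h x) A a ∧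
      ∀ a' ∈ A, IsMinOn (h x) A a' → a' = a)
    (h' : EuclideanSpace ℝ (Fin d) → EuclideanSpace ℝ (Fin k) →
      (EuclideanSpace ℝ (Fin k) →L[ℝ] ℝ))
    (h'' : EuclideanSpace ℝ (Fin d) → EuclideanSpace ℝ (Fin k) →
      (EuclideanSpace ℝ (Fin k) →L[ℝ] EuclideanSpace ℝ (Fin k) →L[ℝ] ℝ))
    (hderiv1 : ∀ x ∈ closure O, ∀ a ∈ A, HasFDerivWithinAt (h x) (h' x a) A a)
    (hderiv2 : ∀ x ∈ closure O, ∀ a ∈ A, HasFDerivWithinAt (h' x) (h'' x a) A a)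
    (hcont2 : ContinuousOn (fun q : EuclideanSpace ℝ (Fin d) × EuclideanSpace ℝ (Fin k) =>
      h'' q.1 q.2) (closure O ×ˢ A)) :
    ∃ C ≥ (0 : ℝ), ∃ τ₀ > (0 : ℝ), ∀ x ∈ closure O, ∀ τ : ℝ, 0 < τ → τ ≤ τ₀ →
      0 ≤ -τ * Real.log (∫ a, Real.exp (-h x a / τ) ∂μ) - sInf (h x '' A) ∧
      -τ * Real.log (∫ a, Real.exp (-h x a / τ) ∂μ) - sInf (h x '' A)
        ≤ C * τ * Real.log (1 / τ) := by
  obtain rfl : μ = volume[|A] := hμ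
  rcases (closure O).eq_empty_or_nonempty with hO | ⟨x₀, hx₀⟩
  · exact ⟨0, le_rfl, 1, one_pos, by simp [hO]⟩
  obtain ⟨z, hz, -⟩ := hmin x₀ hx₀
  obtain ⟨r, hr, hball⟩ := isOpen_iff.1 isOpen_interior z hz
  obtain ⟨M, hM⟩ := (hObdd.isCompact_closure.prod hAcomp).exists_bound_of_continuousOn
    (f := fun q : EuclideanSpace ℝ (Fin d) × EuclideanSpace ℝ (Fin k) => h'' q.1 q.2) hcont2
  obtain ⟨C, hC0, hC⟩ := exists_softmin_sub_min_le volume hAconv hAcomp hr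
    (hball.trans interior_subset)
    ((norm_nonneg (h'' x₀ z)).trans (hM (x₀, z) ⟨hx₀, interior_subset hz⟩))
  refine ⟨C, hC0, exp (-1), exp_pos _, fun x hx τ hτ hτ₀ => ?_⟩
  obtain ⟨a₁, ha₁, hmin₁, -⟩ := hmin x hx
  have hinf : sInf (h x '' A) = h x a₁ :=
    IsLeast.csInf_eq ⟨mem_image_of_mem _ (interior_subset ha₁),
      forall_mem_image.2 (isMinOn_iff.1 hmin₁)⟩
  rw [hinf]
  exact hC (h x) a₁ (interior_subset ha₁) (fun a ha => (hderiv1 x hx a ha).continuousWithinAt)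
    hmin₁ (fun a ha => hmin₁.le_add_mul_norm_sub_sq_of_norm_hessian_le hAconv (hderiv1 x hx)
      (hderiv2 x hx) (fun b hb => hM (x, b) ⟨hx, hb⟩) ha₁ ha) τ hτ hτ₀

/-- uniform Laplace asymptotics, unique interior minimizer. Let
`O ⊂ ℝ^d` be a nonempty bounded domain, `A ⊂ ℝ^k` a nonempty convex compact set, `μ` the
uniform probability measure on `A`, and `h : Ō × A → ℝ` continuous such that for each
`x ∈ Ō` the map `a ↦ h(x,a)` has a unique minimizer over `A`, lying in the interior of `A`,
and is twice differentiable with second derivative jointly continuous on `Ō × A`. Then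
there are `C ≥ 0` and `τ₀ > 0` with
`0 ≤ -τ·ln ∫_A e^{-h(x,a)/τ} μ(da) - min_{a∈A} h(x,a) ≤ C·τ·ln(1/τ)`
for all `x ∈ Ō` and `τ ∈ (0, τ₀]`. -/
theorem laplace_asymptotics_unique_interior_minimizer
    {d k : ℕ}
    (O : Set (EuclideanSpace ℝ (Fin d))) (hOopen : IsOpen O) (hOconn : IsConnected O)
    (hObdd : Bornology.IsBounded O)
    (A : Set (EuclideanSpace ℝ (Fin k))) (hAne : A.Nonempty) (hAconv : Convex ℝ A)
    (hAcomp : IsCompact A)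
    (μ : Measure (EuclideanSpace ℝ (Fin k)))
    (hμ : μ = (volume A)⁻¹ • volume.restrict A)
    (h : EuclideanSpace ℝ (Fin d) → EuclideanSpace ℝ (Fin k) → ℝ)
    (hcont : ContinuousOn (fun q : EuclideanSpace ℝ (Fin d) × EuclideanSpace ℝ (Fin k) =>
      h q.1 q.2) (closure O ×ˢ A))
    (hmin : ∀ x ∈ closure O, ∃ a ∈ interior A, IsMinOn (h x) A a ∧
      ∀ a' ∈ A, IsMinOn (h x) A a' → a' = a)
    (h' : EuclideanSpace ℝ (Fin d) → EuclideanSpace ℝ (Fin k) →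
      (EuclideanSpace ℝ (Fin k) →L[ℝ] ℝ))
    (h'' : EuclideanSpace ℝ (Fin d) → EuclideanSpace ℝ (Fin k) →
      (EuclideanSpace ℝ (Fin k) →L[ℝ] EuclideanSpace ℝ (Fin k) →L[ℝ] ℝ))
    (hderiv1 : ∀ x ∈ closure O, ∀ a ∈ A, HasFDerivWithinAt (h x) (h' x a) A a)
    (hderiv2 : ∀ x ∈ closure O, ∀ a ∈ A, HasFDerivWithinAt (h' x) (h'' x a) A a)
    (hcont2 : ContinuousOn (fun q : EuclideanSpace ℝ (Fin d) × EuclideanSpace ℝ (Fin k) =>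
      h'' q.1 q.2) (closure O ×ˢ A)) :
    ∃ C ≥ (0 : ℝ), ∃ τ₀ > (0 : ℝ), ∀ x ∈ closure O, ∀ τ : ℝ, 0 < τ → τ ≤ τ₀ →
      0 ≤ -τ * Real.log (∫ a, Real.exp (-h x a / τ) ∂μ) - sInf (h x '' A) ∧
      -τ * Real.log (∫ a, Real.exp (-h x a / τ) ∂μ) - sInf (h x '' A)
        ≤ C * τ * Real.log (1 / τ) :=
  laplace_asymptotics_unique_interior_minimizer_general O hObdd A hAconv hAcomp μ hμ h hmin h' h''
    hderiv1 hderiv2 hcont2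
end

section
/- Let A be a measurable space, μ a probability measure on A, and Z, Z' : A → ℝ bounded measurable functions. Then the real function t ↦ KL( π(Z + t·Z') | μ ) is differentiable at t = 0, with derivative ∫_A ( Z(a) - ln ∫_A e^{Z} dμ ) · ( Z'(a) - ∫_A Z' dπ(Z) ) π(Z)(da). -/
open MeasureTheory

/-- The (real-valued) Kullback–Leibler divergence `KL(ν|μ) = ∫ ln (dν/dμ) dν`, expressed via
the Radon–Nikodym derivative; for the Gibbs measures considered here `ν ≪ μ` and the
integral is finite. -/
noncomputable def KLreal {A : Type*} [MeasurableSpace A] (ν μ : Measure A) : ℝ :=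
  ∫ a, Real.log (ν.rnDeriv μ a).toReal ∂ν

/-!
Write `π_t` for the Gibbs measure of `Z + t Z'` and `E_t = ∫ exp (Z + t Z') dμ`. Since
`log (dπ_t/dμ) = Z + t Z' - log E_t`, the divergence is
`KL(π_t|μ) = ∫ Z dπ_t + t ∫ Z' dπ_t - log E_t`. Differentiating under the integral sign (all
integrands are bounded) gives `(log E_t)'(0) = ∫ Z' dπ_0` and
`(∫ g dπ_t)'(0) = ∫ g Z' dπ_0 - ∫ g dπ_0 ∫ Z' dπ_0`; the term `t ∫ Z' dπ_t` contributes
`∫ Z' dπ_0`, which cancels `(log E_t)'(0)`, so the derivative at `0` is the `π_0`-covariance of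
`Z` and `Z'`. The constant `log E_0` in the claimed integrand does not change it, because
`Z' - ∫ Z' dπ_0` has mean zero.
-/

open Real

section

variable {A : Type*}

lemma exists_abs_add_mul_le {Z Z' : A → ℝ} (hZb : ∃ C, ∀ a, |Z a| ≤ C)
    (hZ'b : ∃ C, ∀ a, |Z' a| ≤ C) (t : ℝ) : ∃ C, ∀ a, |Z a + t * Z' a| ≤ C := by
  obtain ⟨C, hC⟩ := hZb
  obtain ⟨C', hC'⟩ := hZ'b
  refine ⟨C + |t| * C', fun a => (abs_add_le _ _).trans ?_⟩
  rw [abs_mul]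
  exact add_le_add (hC a) (mul_le_mul_of_nonneg_left (hC' a) (abs_nonneg t))

variable [MeasurableSpace A] {μ : Measure A}

lemma gibbs_eq_tilted (μ : Measure A) (W : A → ℝ) : gibbs μ W = μ.tilted W := rfl

lemma isProbabilityMeasure_gibbs [NeZero μ] {W : A → ℝ}
    (hexp : Integrable (fun a => exp (W a)) μ) : IsProbabilityMeasure (gibbs μ W) :=
  isProbabilityMeasure_tilted hexp

lemma integrable_mul_exp [IsFiniteMeasure μ] {g W : A → ℝ} (hg : Measurable g)
    (hW : Measurable W) (hgb : ∃ C, ∀ a, |g a| ≤ C) (hWb : ∃ C, ∀ a, |W a| ≤ C) :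
    Integrable (fun a => g a * exp (W a)) μ := by
  obtain ⟨Cg, hCg⟩ := hgb
  obtain ⟨C, hC⟩ := hWb
  refine .of_bound (hg.mul hW.exp).aestronglyMeasurable (Cg * exp C) (ae_of_all _ fun a => ?_)
  rw [norm_mul, norm_eq_abs, norm_of_nonneg (exp_nonneg _)]
  exact mul_le_mul (hCg a) (exp_le_exp.2 (abs_le.1 (hC a)).2) (exp_nonneg _)
    ((abs_nonneg _).trans (hCg a))

lemma integrable_exp [IsFiniteMeasure μ] {W : A → ℝ} (hW : Measurable W)
    (hWb : ∃ C, ∀ a, |W a| ≤ C) : Integrable (fun a => exp (W a)) μ := by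
  simpa using integrable_mul_exp (μ := μ) (g := fun _ => 1) measurable_const hW
    ⟨1, fun _ => by simp⟩ hWb

lemma integrable_gibbs [IsFiniteMeasure μ] [NeZero μ] {W g : A → ℝ} (hW : Measurable W)
    (hWb : ∃ C, ∀ a, |W a| ≤ C) (hg : Measurable g) (hgb : ∃ C, ∀ a, |g a| ≤ C) :
    Integrable g (gibbs μ W) := by
  have := isProbabilityMeasure_gibbs (integrable_exp (μ := μ) hW hWb)
  obtain ⟨C, hC⟩ := hgb
  exact .of_bound hg.aestronglyMeasurable C (ae_of_all _ hC)

lemma integral_gibbs (μ : Measure A) (W g : A → ℝ) :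
    ∫ a, g a ∂gibbs μ W = (∫ a, g a * exp (W a) ∂μ) / ∫ a, exp (W a) ∂μ := by
  rw [gibbs_eq_tilted, integral_tilted, ← integral_div]
  simp only [smul_eq_mul]
  congr 1 with a
  ring

lemma KLreal_gibbs [SigmaFinite μ] [NeZero μ] {W : A → ℝ}
    (hexp : Integrable (fun a => exp (W a)) μ) (hW : Integrable W (gibbs μ W)) :
    KLreal (gibbs μ W) μ = ∫ a, W a ∂gibbs μ W - log (∫ a, exp (W a) ∂μ) := by
  have := isProbabilityMeasure_gibbs hexp
  have hlog : (fun a => log ((gibbs μ W).rnDeriv μ a).toReal)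
      =ᵐ[gibbs μ W] fun a => W a - log (∫ a, exp (W a) ∂μ) :=
    (tilted_absolutelyContinuous μ W).ae_le (log_rnDeriv_tilted_left_self hexp)
  rw [KLreal, integral_congr_ae hlog, integral_sub hW (integrable_const _), integral_const,
    probReal_univ, one_smul]

lemma hasDerivAt_integral_mul_exp_add_mul [IsFiniteMeasure μ] {g Z Z' : A → ℝ}
    (hg : Measurable g) (hZ : Measurable Z) (hZ' : Measurable Z')
    (hgb : ∃ C, ∀ a, |g a| ≤ C) (hZb : ∃ C, ∀ a, |Z a| ≤ C) (hZ'b : ∃ C, ∀ a, |Z' a| ≤ C) :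
    HasDerivAt (fun t => ∫ a, g a * exp (Z a + t * Z' a) ∂μ)
      (∫ a, g a * Z' a * exp (Z a) ∂μ) 0 := by
  obtain ⟨Cg, hCg⟩ := hgb
  obtain ⟨C, hC⟩ := hZb
  obtain ⟨C', hC'⟩ := hZ'b
  have hW : ∀ t : ℝ, Measurable fun a => Z a + t * Z' a := fun t => hZ.add (hZ'.const_mul t)
  have hderiv : ∀ a t, HasDerivAt (fun s => g a * exp (Z a + s * Z' a))
      (g a * Z' a * exp (Z a + t * Z' a)) t := fun a t =>
    ((((hasDerivAt_mul_const (Z' a)).const_add (Z a)).exp).const_mul (g a)).congr_deriv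
      (by ring)
  have hbound : ∀ a, ∀ t ∈ Metric.ball (0 : ℝ) 1,
      ‖g a * Z' a * exp (Z a + t * Z' a)‖ ≤ Cg * C' * exp (C + C') := fun a t ht => by
    have ht : |t| < 1 := by simpa using ht
    have hexp : exp (Z a + t * Z' a) ≤ exp (C + C') := by
      refine exp_le_exp.2 ((le_abs_self _).trans ((abs_add_le _ _).trans ?_))
      rw [abs_mul]
      nlinarith [hC a, hC' a, abs_nonneg t, abs_nonneg (Z' a)]
    rw [norm_mul, norm_mul, norm_eq_abs, norm_eq_abs, norm_of_nonneg (exp_nonneg _)]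
    have hCg0 := (abs_nonneg _).trans (hCg a)
    have hC'0 := (abs_nonneg _).trans (hC' a)
    gcongr
    exacts [hCg a, hC' a]
  have h := hasDerivAt_integral_of_dominated_loc_of_deriv_le (Metric.ball_mem_nhds 0 one_pos)
    (.of_forall fun t => (integrable_mul_exp (μ := μ) hg (hW t) ⟨Cg, hCg⟩
      (exists_abs_add_mul_le ⟨C, hC⟩ ⟨C', hC'⟩ t)).aestronglyMeasurable)
    (integrable_mul_exp hg (hW 0) ⟨Cg, hCg⟩ (exists_abs_add_mul_le ⟨C, hC⟩ ⟨C', hC'⟩ 0))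
    ((hg.mul hZ').mul (hW 0).exp).aestronglyMeasurable (ae_of_all _ hbound)
    (integrable_const _) (ae_of_all _ fun a t _ => hderiv a t)
  simpa using h.2

lemma integral_sub_mul_sub_integral {ν : Measure A} [IsProbabilityMeasure ν] {f g : A → ℝ}
    (hf : Integrable f ν) (hg : Integrable g ν) (hfg : Integrable (fun a => f a * g a) ν)
    (c : ℝ) :
    ∫ a, (f a - c) * (g a - ∫ a', g a' ∂ν) ∂ν
      = ∫ a, f a * g a ∂ν - (∫ a, f a ∂ν) * ∫ a, g a ∂ν := by
  set m := ∫ a, g a ∂ν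
  have h : (fun a => (f a - c) * (g a - m))
      = fun a => (f a * g a - m * f a) - c * (g a - m) := by
    ext a; ring
  have hfg_sub : Integrable (fun a => f a * g a - m * f a) ν := hfg.sub (hf.const_mul m)
  have hg_sub : Integrable (fun a => g a - m) ν := hg.sub (integrable_const m)
  rw [h, integral_sub hfg_sub (hg_sub.const_mul c), integral_sub hfg (hf.const_mul m),
    integral_const_mul, integral_const_mul, integral_sub hg (integrable_const m),
    integral_const, probReal_univ, one_smul]
  ring

section Perturbation

variable [IsFiniteMeasure μ] [NeZero μ] {Z Z' : A → ℝ} (hZ : Measurable Z) (hZ' : Measurable Z')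
  (hZb : ∃ C, ∀ a, |Z a| ≤ C) (hZ'b : ∃ C, ∀ a, |Z' a| ≤ C)
include hZ hZ' hZb hZ'b

lemma hasDerivAt_log_integral_exp_add_mul :
    HasDerivAt (fun t => log (∫ a, exp (Z a + t * Z' a) ∂μ)) (∫ a, Z' a ∂gibbs μ Z) 0 := by
  have hE := hasDerivAt_integral_mul_exp_add_mul (μ := μ) (g := fun _ => 1) measurable_const
    hZ hZ' ⟨1, fun _ => by simp⟩ hZb hZ'b
  have hpos := integral_exp_pos (integrable_exp (μ := μ) hZ hZb)
  simp only [one_mul] at hE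
  refine (hE.log (by simpa using hpos.ne')).congr_deriv ?_
  simp [integral_gibbs]

lemma hasDerivAt_integral_gibbs_add_mul {g : A → ℝ} (hg : Measurable g)
    (hgb : ∃ C, ∀ a, |g a| ≤ C) :
    HasDerivAt (fun t => ∫ a, g a ∂gibbs μ fun a => Z a + t * Z' a)
      (∫ a, g a * Z' a ∂gibbs μ Z - (∫ a, g a ∂gibbs μ Z) * ∫ a, Z' a ∂gibbs μ Z) 0 := by
  have hN := hasDerivAt_integral_mul_exp_add_mul (μ := μ) hg hZ hZ' hgb hZb hZ'b
  have hE := hasDerivAt_integral_mul_exp_add_mul (μ := μ) (g := fun _ => 1) measurable_const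
    hZ hZ' ⟨1, fun _ => by simp⟩ hZb hZ'b
  have hpos := integral_exp_pos (integrable_exp (μ := μ) hZ hZb)
  simp only [one_mul] at hE
  simp only [integral_gibbs]
  refine (hN.div hE (by simpa using hpos.ne')).congr_deriv ?_
  simp only [zero_mul, add_zero]
  field_simp

lemma KLreal_gibbs_add_mul (t : ℝ) :
    KLreal (gibbs μ fun a => Z a + t * Z' a) μ
      = ∫ a, Z a ∂gibbs μ (fun a => Z a + t * Z' a)
        + t * ∫ a, Z' a ∂gibbs μ (fun a => Z a + t * Z' a)
        - log (∫ a, exp (Z a + t * Z' a) ∂μ) := by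
  have hW : Measurable fun a => Z a + t * Z' a := hZ.add (hZ'.const_mul t)
  have hWb := exists_abs_add_mul_le hZb hZ'b t
  rw [KLreal_gibbs (integrable_exp hW hWb) (integrable_gibbs hW hWb hW hWb),
    integral_add (integrable_gibbs hW hWb hZ hZb)
      ((integrable_gibbs hW hWb hZ' hZ'b).const_mul t), integral_const_mul]

end Perturbation

end

/-- For a probability measure `μ` and bounded measurable `Z, Z' : A → ℝ`,
the map `t ↦ KL(π(Z + t·Z')|μ)` is differentiable at `t = 0`, with derivative
`∫ (Z a - ln ∫ e^Z dμ) · (Z' a - ∫ Z' dπ(Z)) dπ(Z)(a)`. -/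
theorem hasDerivAt_kl_gibbs
    {A : Type*} [MeasurableSpace A] (μ : Measure A) [IsProbabilityMeasure μ]
    (Z Z' : A → ℝ) (hZmeas : Measurable Z) (hZ'meas : Measurable Z')
    (hZb : ∃ C, ∀ a, |Z a| ≤ C) (hZ'b : ∃ C, ∀ a, |Z' a| ≤ C) :
    HasDerivAt (fun t : ℝ => KLreal (gibbs μ fun a => Z a + t * Z' a) μ)
      (∫ a, (Z a - Real.log (∫ a', Real.exp (Z a') ∂μ))
          * (Z' a - ∫ a', Z' a' ∂(gibbs μ Z)) ∂(gibbs μ Z)) 0 := by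
  have := isProbabilityMeasure_gibbs (integrable_exp (μ := μ) hZmeas hZb)
  have hZZ' : Integrable (fun a => Z a * Z' a) (gibbs μ Z) := by
    obtain ⟨C, hC⟩ := hZb
    exact (integrable_gibbs hZmeas ⟨C, hC⟩ hZ'meas hZ'b).bdd_mul hZmeas.aestronglyMeasurable
      (ae_of_all _ hC)
  rw [funext (KLreal_gibbs_add_mul (μ := μ) hZmeas hZ'meas hZb hZ'b),
    integral_sub_mul_sub_integral (integrable_gibbs hZmeas hZb hZmeas hZb)
    (integrable_gibbs hZmeas hZb hZ'meas hZ'b) hZZ']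
  refine (((hasDerivAt_integral_gibbs_add_mul (μ := μ) hZmeas hZ'meas hZb hZ'b hZmeas hZb).add
    ((hasDerivAt_id' (x := 0)).mul
      (hasDerivAt_integral_gibbs_add_mul hZmeas hZ'meas hZb hZ'b hZ'meas hZ'b))).sub
    (hasDerivAt_log_integral_exp_add_mul hZmeas hZ'meas hZb hZ'b)).congr_deriv ?_
  simp only [zero_mul, add_zero, one_mul]
  ring
end
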